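/- Let X be a geodesic δ-hyperbolic metric space with basepoint x₀ and let A and B be hyperbolic isometries of X such that AB is also hyperbolic. Assume A⁺ = B⁻, encoded by: the Gromov products (Aⁿx₀ | B⁻ᵐx₀)_{x₀} tend to +∞ as min(n,m) → +∞. Assume there exist geodesic lines L_A from A⁻ to A⁺, L_B from B⁻ to B⁺, and L_{AB} from (AB)⁻ to (AB)⁺. If in addition l_S(A) > l_S(B) + 88δ, then (AB)⁺ = A⁺; that is, the Gromov products ((AB)ⁿx₀ | Aᵐx₀)_{x₀} tend to +∞ as min(n,m) → +∞. -/

import Mathlib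

open Metric Filter Set Topology

/-- The Gromov product `(x|y)_z = ½(d(z,x)+d(z,y)−d(x,y))`. -/
noncomputable def gromovProd {X : Type*} [MetricSpace X] (x y z : X) : ℝ :=
  (dist z x + dist z y - dist x y) / 2

/-- A parametrized geodesic segment from `x` to `y` (defined on `[0, dist x y]`). -/
def IsGeodesicSegment {X : Type*} [MetricSpace X] (x y : X) (f : ℝ → X) : Prop :=
  f 0 = x ∧ f (dist x y) = y ∧
    ∀ s ∈ Set.Icc (0 : ℝ) (dist x y), ∀ t ∈ Set.Icc (0 : ℝ) (dist x y),
      dist (f s) (f t) = |s - t|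

/-- The metric space `X` is geodesic: any two points are joined by a geodesic segment. -/
def GeodesicMetricSpace (X : Type*) [MetricSpace X] : Prop :=
  ∀ x y : X, ∃ f : ℝ → X, IsGeodesicSegment x y f

/-- `X` is δ-hyperbolic in the sense of Rips: every geodesic triangle is δ-thin,
i.e. each side is contained in the δ-neighbourhood of the union of the other two. -/
def RipsHyperbolic (X : Type*) [MetricSpace X] (δ : ℝ) : Prop :=
  ∀ (x y z : X) (f g h : ℝ → X),
    IsGeodesicSegment x y f → IsGeodesicSegment y z g → IsGeodesicSegment z x h →
      ∀ s ∈ Set.Icc (0 : ℝ) (dist x y),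
        infDist (f s) (g '' Set.Icc 0 (dist y z) ∪ h '' Set.Icc 0 (dist z x)) ≤ δ

/-- A (parametrized) geodesic line in `X`. -/
def IsGeodesicLine {X : Type*} [MetricSpace X] (L : ℝ → X) : Prop :=
  ∀ s t : ℝ, dist (L s) (L t) = |s - t|

/-- A (parametrized) geodesic ray in `X` (parametrized on `[0,∞)`). -/
def IsGeodesicRay {X : Type*} [MetricSpace X] (r : ℝ → X) : Prop :=
  ∀ s t : ℝ, 0 ≤ s → 0 ≤ t → dist (r s) (r t) = |s - t|

/-- `L` is a geodesic from `A⁻` to `A⁺` (oriented toward `A⁺`): it is a geodesic line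
such that, with `x₀ = L 0`, the Gromov products `(Aⁿx₀ | L t)_{x₀}` tend to `+∞` as
`min(n,t) → +∞`, and `(A⁻ⁿx₀ | L (−t))_{x₀}` tend to `+∞` as `min(n,t) → +∞`. -/
def IsGeodesicFromTo {X : Type*} [MetricSpace X] (A : X ≃ᵢ X) (L : ℝ → X) : Prop :=
  IsGeodesicLine L ∧
    (∀ M : ℝ, ∃ N : ℝ, ∀ (n : ℕ) (t : ℝ), N ≤ (n : ℝ) → N ≤ t →
      M ≤ gromovProd ((A ^ n) (L 0)) (L t) (L 0)) ∧
    (∀ M : ℝ, ∃ N : ℝ, ∀ (n : ℕ) (t : ℝ), N ≤ (n : ℝ) → N ≤ t →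
      M ≤ gromovProd ((A⁻¹ ^ n) (L 0)) (L (-t)) (L 0))

/-- An element of `F₂` is primitive if it is the image of a generator under an
automorphism of `F₂` (equivalently, it belongs to some free basis). -/
def Primitive (γ : FreeGroup (Fin 2)) : Prop :=
  ∃ φ : FreeGroup (Fin 2) ≃* FreeGroup (Fin 2), φ (FreeGroup.of 0) = γ

/-- The (reduced) word length of an element of `F₂`. -/
noncomputable def wordLength (γ : FreeGroup (Fin 2)) : ℕ := γ.toWord.length

/-- The cyclically reduced word length `‖γ‖`: the minimum of the word lengths
of the conjugates of `γ`. -/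
noncomputable def cycLength (γ : FreeGroup (Fin 2)) : ℕ :=
  sInf (Set.range fun g : FreeGroup (Fin 2) => wordLength (g * γ * g⁻¹))

/-- `γ` is cyclically reduced if its word length equals its cyclically reduced length. -/
def CyclicallyReduced (γ : FreeGroup (Fin 2)) : Prop :=
  wordLength γ = cycLength γ

/-!
Along its axis a hyperbolic isometry `T` has small turning angles `(T⁻ᵖz | Tᵖz)_z ≤ 6δ`, so by
the local-to-global principle for thin triangles `d(Tⁿx₀, x₀) = n l_S(T) + O(1)`. Hence the
Busemann function `β(z) = liminf (d(z, Aᵐx₀) − m l_S(A))` of `A⁺` is finite and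
`β ∘ A = β − l_S(A)`, and similarly for `B⁻¹`. Since `A⁺ = B⁻`, the Busemann functions of `A`
and of `B⁻¹` differ by a function that varies by at most `6δ`; therefore
`β ∘ AB ≤ β − (l_S(A) − l_S(B) − 6δ)` and `β((AB)ⁿx₀) → −∞`. Finally, points deep in the
horoballs of `A⁺` have large Gromov product with the far orbit points `Aᵐx₀`.
-/

open Bornology

section GromovProduct

variable {X : Type*} [MetricSpace X]

lemma gromovProd_nonneg (x y z : X) : 0 ≤ gromovProd x y z := by
  unfold gromovProd
  linarith [dist_triangle x z y, dist_comm z x]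

lemma gromovProd_comm (x y z : X) : gromovProd x y z = gromovProd y x z := by
  unfold gromovProd
  rw [dist_comm x y]
  ring

lemma gromovProd_le_dist_left (x y z : X) : gromovProd x y z ≤ dist z x := by
  unfold gromovProd
  linarith [dist_triangle z x y, dist_comm x y]

lemma gromovProd_le_dist_right (x y z : X) : gromovProd x y z ≤ dist z y := by
  rw [gromovProd_comm]
  exact gromovProd_le_dist_left y x z

lemma gromovProd_self_left (x y : X) : gromovProd x y x = 0 := by
  simp [gromovProd]

lemma gromovProd_add_gromovProd (x y z : X) :
    gromovProd x y z + gromovProd x z y = dist y z := by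
  unfold gromovProd
  rw [dist_comm z x, dist_comm z y, dist_comm y x]
  ring

lemma gromovProd_le_gromovProd_add_dist (x y p q : X) :
    gromovProd x y q ≤ gromovProd x y p + dist p q := by
  unfold gromovProd
  linarith [dist_triangle q p x, dist_triangle q p y, dist_comm p q]

lemma IsometryEquiv.gromovProd_map (Φ : X ≃ᵢ X) (x y z : X) :
    gromovProd (Φ x) (Φ y) (Φ z) = gromovProd x y z := by
  simp only [gromovProd, Φ.dist_eq]

lemma gromovProd_le_dist_of_dist_add_dist_eq {x z q : X} (hq : dist x q + dist q z = dist x z)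
    (w : X) : gromovProd x z w ≤ dist w q := by
  unfold gromovProd
  linarith [dist_triangle w q x, dist_triangle w q z, dist_comm q x]

end GromovProduct

section Geodesic

variable {X : Type*} [MetricSpace X] {x y : X} {f : ℝ → X} {s : ℝ}

lemma IsGeodesicSegment.dist_left_apply (hf : IsGeodesicSegment x y f)
    (hs : s ∈ Icc 0 (dist x y)) : dist x (f s) = s := by
  rw [← hf.1, hf.2.2 0 ⟨le_rfl, dist_nonneg⟩ s hs, zero_sub, abs_neg, abs_of_nonneg hs.1]

lemma IsGeodesicSegment.dist_apply_right (hf : IsGeodesicSegment x y f)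
    (hs : s ∈ Icc 0 (dist x y)) : dist (f s) y = dist x y - s := by
  conv_lhs => rw [← hf.2.1]
  rw [hf.2.2 s hs _ ⟨dist_nonneg, le_rfl⟩, abs_of_nonpos (by linarith [hs.2])]
  ring

lemma IsGeodesicLine.gromovProd_eq_zero {L : ℝ → X} (hL : IsGeodesicLine L) {s t : ℝ}
    (hs : 0 ≤ s) (ht : 0 ≤ t) : gromovProd (L s) (L (-t)) (L 0) = 0 := by
  simp only [gromovProd, hL _ _, zero_sub, zero_add, abs_neg, sub_neg_eq_add]
  rw [abs_of_nonneg hs, abs_of_nonneg ht, abs_of_nonneg (add_nonneg hs ht)]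
  ring

end Geodesic

namespace RipsHyperbolic

variable {X : Type*} [MetricSpace X] {δ : ℝ}

/-- `h (dist z w - t)` is the point of `[z, w]` at distance `t` from `w`. -/
lemma dist_lt_of_add_le_gromovProd (hhyp : RipsHyperbolic X δ) (hgeo : GeodesicMetricSpace X)
    (hδ : 0 ≤ δ) {w x z : X} {f h : ℝ → X} (hf : IsGeodesicSegment w x f)
    (hh : IsGeodesicSegment z w h) {t r : ℝ} (ht : 0 ≤ t) (hr : δ < r)
    (htr : t + r ≤ gromovProd x z w) : dist (f t) (h (dist z w - t)) < 2 * r := by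
  obtain ⟨g, hg⟩ := hgeo x z
  have hwx := gromovProd_le_dist_left x z w
  have hwz := gromovProd_le_dist_right x z w
  have ht_mem : t ∈ Icc 0 (dist w x) := ⟨ht, by linarith⟩
  have hne : (g '' Icc 0 (dist x z) ∪ h '' Icc 0 (dist z w)).Nonempty :=
    ⟨h 0, Or.inr ⟨0, ⟨le_rfl, dist_nonneg⟩, rfl⟩⟩
  obtain ⟨q, hq, hfq⟩ :=
    (infDist_lt_iff hne).1 ((hhyp w x z f g h hf hg hh t ht_mem).trans_lt hr)
  have hwf : dist w (f t) = t := hf.dist_left_apply ht_mem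
  rcases hq with ⟨u, hu, rfl⟩ | ⟨u, hu, rfl⟩
  · have hbetween : dist x (g u) + dist (g u) z = dist x z := by
      rw [hg.dist_left_apply hu, hg.dist_apply_right hu]
      ring
    linarith [gromovProd_le_dist_of_dist_add_dist_eq hbetween w, dist_triangle w (f t) (g u)]
  · have hs : dist z w - t ∈ Icc 0 (dist z w) := ⟨by linarith [dist_comm z w], by linarith⟩
    -- both points lie on `h`, whose points are determined by their distance to `w`
    have hhu : dist (h u) (h (dist z w - t)) ≤ dist (f t) (h u) := by
      have := abs_dist_sub_le (f t) (h u) w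
      rw [dist_comm (f t) w, hwf, hh.dist_apply_right hu] at this
      rwa [hh.2.2 u hu _ hs, show u - (dist z w - t) = t - (dist z w - u) by ring]
    linarith [dist_triangle (f t) (h u) (h (dist z w - t))]

lemma min_sub_le_gromovProd (hhyp : RipsHyperbolic X δ) (hgeo : GeodesicMetricSpace X)
    (hδ : 0 ≤ δ) (w x y z : X) :
    min (gromovProd x z w) (gromovProd z y w) - 3 * δ ≤ gromovProd x y w := by
  set m := min (gromovProd x z w) (gromovProd z y w)
  refine le_of_forall_sub_le fun ε hε => ?_
  set r := δ + ε / 3 with hr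
  rcases lt_or_ge m r with hmr | hrm
  · have hm : 0 ≤ m := le_min (gromovProd_nonneg x z w) (gromovProd_nonneg z y w)
    linarith [gromovProd_nonneg x y w]
  obtain ⟨f₁, hf₁⟩ := hgeo w x
  obtain ⟨f₂, hf₂⟩ := hgeo w y
  obtain ⟨h, hh⟩ := hgeo z w
  have hxz : m ≤ gromovProd x z w := min_le_left _ _
  have hyz : m ≤ gromovProd y z w := gromovProd_comm z y w ▸ min_le_right _ _
  have h₁ := hhyp.dist_lt_of_add_le_gromovProd hgeo hδ hf₁ hh (t := m - r) (r := r) (by linarith)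
    (by linarith) (by linarith)
  have h₂ := hhyp.dist_lt_of_add_le_gromovProd hgeo hδ hf₂ hh (t := m - r) (r := r) (by linarith)
    (by linarith) (by linarith)
  have hx : dist (f₁ (m - r)) x = dist w x - (m - r) :=
    hf₁.dist_apply_right ⟨by linarith, by linarith [gromovProd_le_dist_left x z w]⟩
  have hy : dist (f₂ (m - r)) y = dist w y - (m - r) :=
    hf₂.dist_apply_right ⟨by linarith, by linarith [gromovProd_le_dist_left y z w]⟩
  have hxy := dist_triangle4 x (f₁ (m - r)) (f₂ (m - r)) y
  have h₁₂ := dist_triangle (f₁ (m - r)) (h (dist z w - (m - r))) (f₂ (m - r))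
  rw [dist_comm x (f₁ _), hx, hy] at hxy
  rw [dist_comm (h _) (f₂ _)] at h₁₂
  unfold gromovProd
  linarith

lemma sum_le_dist_of_gromovProd_le (hhyp : RipsHyperbolic X δ) (hgeo : GeodesicMetricSpace X)
    (hδ : 0 ≤ δ) {y : ℕ → X} {c : ℝ} (hturn : ∀ n, gromovProd (y n) (y (n + 2)) (y (n + 1)) ≤ c)
    (hlong : ∀ n, 2 * (c + 3 * δ) < dist (y n) (y (n + 1))) (n : ℕ) :
    ∑ i ∈ Finset.range n, (dist (y i) (y (i + 1)) - 2 * (c + 3 * δ)) ≤ dist (y 0) (y n) := by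
  -- seen from `yₙ`, the next point `yₙ₊₁` points away from `y₀`
  have hback : ∀ n, gromovProd (y 0) (y (n + 1)) (y n) ≤ c + 3 * δ := by
    intro n
    induction n with
    | zero =>
      rw [gromovProd_self_left]
      linarith [gromovProd_nonneg (y 0) (y 2) (y 1), hturn 0]
    | succ n ih =>
      by_contra! hfar
      have hnear : c + 3 * δ < gromovProd (y n) (y 0) (y (n + 1)) := by
        linarith [gromovProd_add_gromovProd (y 0) (y n) (y (n + 1)),
          gromovProd_comm (y 0) (y n) (y (n + 1)), hlong n]
      have := hhyp.min_sub_le_gromovProd hgeo hδ (y (n + 1)) (y n) (y (n + 2)) (y 0)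
      linarith [lt_min hnear hfar, hturn n]
  induction n with
  | zero => simp
  | succ n ih =>
    rw [Finset.sum_range_succ]
    have := hback n
    unfold gromovProd at this
    linarith [dist_comm (y n) (y 0)]

lemma mul_le_dist_pow (hhyp : RipsHyperbolic X δ) (hgeo : GeodesicMetricSpace X) (hδ : 0 ≤ δ)
    (S : X ≃ᵢ X) (z : X) {c : ℝ} (hturn : gromovProd (S⁻¹ z) (S z) z ≤ c)
    (hlong : 2 * (c + 3 * δ) < dist (S z) z) (n : ℕ) :
    n * (dist (S z) z - 2 * (c + 3 * δ)) ≤ dist ((S ^ n) z) z := by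
  have hstep : ∀ n, dist ((S ^ n) z) ((S ^ (n + 1)) z) = dist (S z) z := fun n => by
    rw [pow_succ, IsometryEquiv.mul_apply, (S ^ n).dist_eq, dist_comm]
  have hturn' : ∀ n, gromovProd ((S ^ n) z) ((S ^ (n + 2)) z) ((S ^ (n + 1)) z) ≤ c := fun n => by
    have hprev : (S ^ (n + 1)) (S⁻¹ z) = (S ^ n) z := by
      rw [pow_succ, IsometryEquiv.mul_apply, IsometryEquiv.apply_inv_self]
    have hnext : (S ^ (n + 1)) (S z) = (S ^ (n + 2)) z := by
      rw [pow_succ S (n + 1), IsometryEquiv.mul_apply]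
    rwa [← hprev, ← hnext, IsometryEquiv.gromovProd_map]
  have hchain := hhyp.sum_le_dist_of_gromovProd_le hgeo hδ (y := fun n => (S ^ n) z) hturn'
    (fun n => by simpa only [hstep] using hlong) n
  simp only [hstep, Finset.sum_const, Finset.card_range, nsmul_eq_mul, pow_zero,
    IsometryEquiv.coe_one, id] at hchain
  rwa [dist_comm z ((S ^ n) z)] at hchain

end RipsHyperbolic

section Translation

variable {X : Type*} [MetricSpace X]

def IsCoarseTranslation (T : X ≃ᵢ X) (x₀ : X) (l : ℝ) : Prop :=
  ∃ C, ∀ n : ℕ, |dist ((T ^ n) x₀) x₀ - n * l| ≤ C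

lemma IsometryEquiv.abs_dist_pow_sub_dist_pow_le (T : X ≃ᵢ X) (x y : X) (n : ℕ) :
    |dist ((T ^ n) x) x - dist ((T ^ n) y) y| ≤ 2 * dist x y := by
  have := dist_dist_dist_le ((T ^ n) x) x ((T ^ n) y) y
  rw [Real.dist_eq, (T ^ n).dist_eq] at this
  linarith

lemma IsometryEquiv.mul_le_dist_pow_of_tendsto (T : X ≃ᵢ X) (x : X) {l : ℝ}
    (hl : Tendsto (fun n : ℕ => dist ((T ^ n) x) x / n) atTop (𝓝 l)) (n : ℕ) :
    n * l ≤ dist ((T ^ n) x) x := by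
  have hsub : Subadditive fun n => dist ((T ^ n) x) x := fun m n => by
    change dist ((T ^ (m + n)) x) x ≤ dist ((T ^ m) x) x + dist ((T ^ n) x) x
    rw [pow_add, IsometryEquiv.mul_apply]
    linarith [dist_triangle ((T ^ m) ((T ^ n) x)) ((T ^ m) x) x, (T ^ m).dist_eq ((T ^ n) x) x]
  have hbdd : BddBelow (range fun n : ℕ => dist ((T ^ n) x) x / n) :=
    ⟨0, by rintro _ ⟨n, rfl⟩; positivity⟩
  obtain rfl := tendsto_nhds_unique hl (hsub.tendsto_lim hbdd)
  rcases eq_or_ne n 0 with rfl | hn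
  · simp
  · exact (le_div_iff₀' (by positivity)).1 (hsub.lim_le_div hbdd hn)

lemma le_mul_of_tendsto_div {u : ℕ → ℝ} {l a c : ℝ} {p : ℕ}
    (hu : Tendsto (fun n : ℕ => u n / n) atTop (𝓝 l)) (hp : 0 < p)
    (h : ∀ n : ℕ, n * a ≤ u (p * n) + c) : a ≤ p * l := by
  have hsub : Tendsto (fun n : ℕ => u (p * n) / (p * n : ℕ)) atTop (𝓝 l) :=
    hu.comp (tendsto_id.const_mul_atTop' hp)
  have hlow : Tendsto (fun n : ℕ => a - c / n) atTop (𝓝 a) := by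
    simpa using tendsto_const_nhds.sub (tendsto_const_div_atTop_nhds_zero_nat c)
  refine le_of_tendsto_of_tendsto hlow (hsub.const_mul (p : ℝ)) ?_
  filter_upwards [eventually_gt_atTop 0] with n hn
  have hn' : (0 : ℝ) < n := by exact_mod_cast hn
  have hp' : (0 : ℝ) < p := by exact_mod_cast hp
  rw [Nat.cast_mul, mul_div_assoc', mul_div_mul_left _ _ hp'.ne', le_div_iff₀ hn', sub_mul,
    div_mul_cancel₀ _ hn'.ne']
  linarith [h n]

lemma mul_sub_le_gromovProd_pow {T : X ≃ᵢ X} {x₀ : X} {l C : ℝ}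
    (hC : ∀ n : ℕ, |dist ((T ^ n) x₀) x₀ - n * l| ≤ C) {m m' : ℕ} (h : m ≤ m') :
    m * l - 3 * C / 2 ≤ gromovProd ((T ^ m') x₀) ((T ^ m) x₀) x₀ := by
  obtain ⟨k, rfl⟩ := Nat.exists_eq_add_of_le h
  have hk : dist ((T ^ (m + k)) x₀) ((T ^ m) x₀) = dist ((T ^ k) x₀) x₀ := by
    rw [pow_add, IsometryEquiv.mul_apply, IsometryEquiv.dist_eq]
  have hmk := abs_le.1 (hC (m + k))
  push_cast at hmk
  unfold gromovProd
  rw [hk, dist_comm x₀, dist_comm x₀]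
  linarith [abs_le.1 (hC m), abs_le.1 (hC k)]

variable {δ : ℝ} {T : X ≃ᵢ X} {L : ℝ → X}

lemma IsGeodesicFromTo.tendsto_dist_pow (hL : IsGeodesicFromTo T L) :
    Tendsto (fun p : ℕ => dist ((T ^ p) (L 0)) (L 0)) atTop atTop := by
  refine tendsto_atTop.2 fun K => ?_
  obtain ⟨N, hN⟩ := hL.2.1 K
  filter_upwards [tendsto_natCast_atTop_atTop.eventually_ge_atTop N] with p hp
  rw [dist_comm]
  exact (hN p N hp le_rfl).trans (gromovProd_le_dist_left _ _ _)

/-- `Tᵖ (L 0)` and `T⁻ᵖ (L 0)` are close to opposite ends of `L`, where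
`(L t | L (-t))_{L 0} = 0`. -/
lemma IsGeodesicFromTo.eventually_gromovProd_le (hhyp : RipsHyperbolic X δ)
    (hgeo : GeodesicMetricSpace X) (hδ : 0 ≤ δ) (hL : IsGeodesicFromTo T L) :
    ∀ᶠ p : ℕ in atTop, gromovProd ((T⁻¹ ^ p) (L 0)) ((T ^ p) (L 0)) (L 0) ≤ 6 * δ := by
  obtain ⟨Nfwd, hfwdN⟩ := hL.2.1 (6 * δ + 1)
  obtain ⟨Nbwd, hbwdN⟩ := hL.2.2 (6 * δ + 1)
  set t := max (max Nfwd Nbwd) 0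
  filter_upwards [tendsto_natCast_atTop_atTop.eventually_ge_atTop (max Nfwd Nbwd)] with p hp
  by_contra! hturn
  have hfwd := hfwdN p t (le_of_max_le_left hp) (le_of_max_le_left (le_max_left _ _))
  have hbwd := hbwdN p t (le_of_max_le_right hp) (le_of_max_le_right (le_max_left _ _))
  have hopp : gromovProd (L t) (L (-t)) (L 0) = 0 :=
    hL.1.gromovProd_eq_zero (le_max_right _ _) (le_max_right _ _)
  have h₁ := hhyp.min_sub_le_gromovProd hgeo hδ (L 0) ((T ^ p) (L 0)) (L (-t)) ((T⁻¹ ^ p) (L 0))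
  have h₂ := hhyp.min_sub_le_gromovProd hgeo hδ (L 0) (L t) (L (-t)) ((T ^ p) (L 0))
  rw [gromovProd_comm ((T ^ p) (L 0))] at h₁
  rw [gromovProd_comm (L t)] at h₂
  have hfwd' : 3 * δ < gromovProd ((T ^ p) (L 0)) (L (-t)) (L 0) := by
    linarith [lt_min hturn (by linarith : 6 * δ < gromovProd ((T⁻¹ ^ p) (L 0)) (L (-t)) (L 0))]
  linarith [lt_min (by linarith : 3 * δ < gromovProd ((T ^ p) (L 0)) (L t) (L 0)) hfwd']

/-- For large `p` the orbit of `Tᵖ` through `z = L 0` has small turning angles, so it moves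
at speed at least `d(Tᵖ z, z) − 18δ`; this speed is at most `p l`. -/
lemma IsGeodesicFromTo.isCoarseTranslation (hhyp : RipsHyperbolic X δ)
    (hgeo : GeodesicMetricSpace X) (hδ : 0 ≤ δ) (hL : IsGeodesicFromTo T L) (x₀ : X) {l : ℝ}
    (hl : Tendsto (fun n : ℕ => dist ((T ^ n) x₀) x₀ / n) atTop (𝓝 l)) :
    IsCoarseTranslation T x₀ l := by
  set z := L 0
  have hbase := T.abs_dist_pow_sub_dist_pow_le x₀ z
  have hupper : ∀ᶠ p : ℕ in atTop, dist ((T ^ p) x₀) x₀ - p * l ≤ 18 * δ + 2 * dist x₀ z := by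
    filter_upwards [hL.eventually_gromovProd_le hhyp hgeo hδ,
      hL.tendsto_dist_pow.eventually_gt_atTop (18 * δ), eventually_gt_atTop 0] with p hturn hlong hp
    have hlin := hhyp.mul_le_dist_pow hgeo hδ (T ^ p) z (c := 6 * δ) (by rwa [← inv_pow])
      (by linarith)
    have hspeed := le_mul_of_tendsto_div hl hp (a := dist ((T ^ p) z) z - 18 * δ)
      (c := 2 * dist x₀ z) fun n => by
        have := abs_le.1 (hbase (p * n))
        rw [pow_mul] at this ⊢
        linarith [hlin n]
    linarith [abs_le.1 (hbase p)]
  obtain ⟨C, hC⟩ := (isBoundedUnder_of_eventually_le hupper).bddAbove_range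
  refine ⟨C, fun n => abs_le.2 ⟨?_, hC (mem_range_self n)⟩⟩
  have hC0 := hC (mem_range_self 0)
  simp only [pow_zero, IsometryEquiv.coe_one, id, dist_self, CharP.cast_eq_zero, zero_mul,
    sub_zero] at hC0
  linarith [T.mul_le_dist_pow_of_tendsto x₀ hl n]

lemma IsCoarseTranslation.inv {x₀ : X} {l : ℝ} (hT : IsCoarseTranslation T x₀ l) :
    IsCoarseTranslation T⁻¹ x₀ l := by
  obtain ⟨C, hC⟩ := hT
  refine ⟨C, fun n => ?_⟩
  rw [inv_pow, ← (T ^ n).dist_eq, IsometryEquiv.apply_inv_self, dist_comm]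
  exact hC n

end Translation

section Liminf

variable {u v : ℕ → ℝ}

lemma liminf_le_liminf_add (hu : IsBounded (range u)) (hv : IsBounded (range v)) {c : ℝ}
    (h : ∀ᶠ n in atTop, u n ≤ v n + c) : liminf u atTop ≤ liminf v atTop + c := by
  obtain ⟨b, hb⟩ := hv.bddAbove
  rw [← liminf_add_const atTop v c hv.bddAbove.isBoundedUnder_of_range.isCoboundedUnder_ge
    hv.bddBelow.isBoundedUnder_of_range]
  exact liminf_le_liminf h hu.bddBelow.isBoundedUnder_of_range
    (isCoboundedUnder_ge_of_le atTop (x := b + c) fun n => by linarith [hb (mem_range_self n)])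

lemma liminf_sub_liminf_le {u' v' : ℕ → ℝ} (hu : IsBounded (range u))
    (hu' : IsBounded (range u')) (hv : IsBounded (range v)) (hv' : IsBounded (range v')) {c : ℝ}
    (h : ∀ᶠ k in atTop, ∀ᶠ n in atTop, u n - u' n ≤ v k - v' k + c) :
    liminf u atTop - liminf u' atTop ≤ liminf v atTop - liminf v' atTop + c := by
  have hk : ∀ᶠ k in atTop, v' k ≤ v k + (c + liminf u' atTop - liminf u atTop) := by
    filter_upwards [h] with k hk
    have := liminf_le_liminf_add hu hu' (c := v k - v' k + c) (hk.mono fun n hn => by linarith)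
    linarith
  linarith [liminf_le_liminf_add hv' hv hk]

lemma Bornology.IsBounded.frequently_lt_liminf_add (hu : IsBounded (range u)) {ε : ℝ} (hε : 0 < ε) :
    ∃ᶠ n in atTop, u n < liminf u atTop + ε :=
  frequently_lt_of_liminf_lt hu.bddAbove.isBoundedUnder_of_range.isCoboundedUnder_ge
    (lt_add_of_pos_right _ hε)

end Liminf

section Busemann

variable {X : Type*} [MetricSpace X]

/-- A Busemann function of the attracting fixed point `T⁺`. -/
noncomputable def busemann (T : X ≃ᵢ X) (x₀ : X) (l : ℝ) (z : X) : ℝ :=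
  liminf (fun n : ℕ => dist z ((T ^ n) x₀) - n * l) atTop

variable {T : X ≃ᵢ X} {x₀ : X} {l : ℝ}

lemma IsCoarseTranslation.isBounded_range (hT : IsCoarseTranslation T x₀ l) (z : X) :
    IsBounded (range fun n : ℕ => dist z ((T ^ n) x₀) - n * l) := by
  obtain ⟨C, hC⟩ := hT
  refine isBounded_iff_forall_norm_le.2 ⟨dist z x₀ + C, ?_⟩
  rintro _ ⟨n, rfl⟩
  calc |dist z ((T ^ n) x₀) - n * l|
      ≤ |dist z ((T ^ n) x₀) - dist x₀ ((T ^ n) x₀)| + |dist ((T ^ n) x₀) x₀ - n * l| := by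
        rw [dist_comm x₀]
        exact abs_sub_le _ _ _
    _ ≤ dist z x₀ + C := add_le_add (abs_dist_sub_le _ _ _) (hC n)

lemma IsCoarseTranslation.busemann_apply (hT : IsCoarseTranslation T x₀ l) (z : X) :
    busemann T x₀ l (T z) = busemann T x₀ l z - l := by
  have hshift : ∀ n : ℕ, dist (T z) ((T ^ (n + 1)) x₀) - ↑(n + 1) * l =
      (dist z ((T ^ n) x₀) - n * l) + -l := fun n => by
    rw [pow_succ', IsometryEquiv.mul_apply, T.dist_eq]
    push_cast
    ring
  have hz := hT.isBounded_range z
  rw [busemann, ← liminf_nat_add _ 1]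
  simp only [hshift]
  rw [liminf_add_const atTop _ (-l) hz.bddAbove.isBoundedUnder_of_range.isCoboundedUnder_ge
    hz.bddBelow.isBoundedUnder_of_range, busemann, sub_eq_add_neg]

end Busemann

namespace RipsHyperbolic

variable {X : Type*} [MetricSpace X] {δ : ℝ}

lemma dist_sub_dist_le (hhyp : RipsHyperbolic X δ) (hgeo : GeodesicMetricSpace X) (hδ : 0 ≤ δ)
    {a b z z' : X} (h : dist z z' ≤ gromovProd a b z) :
    dist z a - dist z' a ≤ dist z b - dist z' b + 6 * δ := by
  have hmin := hhyp.min_sub_le_gromovProd hgeo hδ z b z' a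
  rw [min_eq_right (by linarith [gromovProd_le_dist_right a z' z, gromovProd_comm a b z])] at hmin
  unfold gromovProd at hmin
  linarith [dist_comm a z', dist_comm b z']

variable {T S : X ≃ᵢ X} {x₀ : X} {l l' : ℝ}

lemma busemann_sub_busemann_le (hhyp : RipsHyperbolic X δ) (hgeo : GeodesicMetricSpace X)
    (hδ : 0 ≤ δ) (hT : IsCoarseTranslation T x₀ l) (hS : IsCoarseTranslation S x₀ l')
    (hshared : ∀ M : ℝ, ∃ N : ℝ, ∀ n m : ℕ, N ≤ (n : ℝ) → N ≤ (m : ℝ) →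
      M ≤ gromovProd ((T ^ n) x₀) ((S ^ m) x₀) x₀) (z z' : X) :
    busemann T x₀ l z - busemann T x₀ l z' ≤ busemann S x₀ l' z - busemann S x₀ l' z' + 6 * δ := by
  obtain ⟨N, hN⟩ := hshared (dist x₀ z + dist z z')
  have hlarge := tendsto_natCast_atTop_atTop.eventually_ge_atTop N
  refine liminf_sub_liminf_le (hT.isBounded_range z) (hT.isBounded_range z')
    (hS.isBounded_range z) (hS.isBounded_range z') ?_
  filter_upwards [hlarge] with k hk
  filter_upwards [hlarge] with n hn
  have := hhyp.dist_sub_dist_le hgeo hδ (z := z) (z' := z') (by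
    linarith [hN n k hn hk, gromovProd_le_gromovProd_add_dist ((T ^ n) x₀) ((S ^ k) x₀) z x₀,
      dist_comm x₀ z])
  linarith

lemma le_gromovProd_of_busemann_le (hhyp : RipsHyperbolic X δ) (hgeo : GeodesicMetricSpace X)
    (hδ : 0 ≤ δ) (hT : IsCoarseTranslation T x₀ l) (hl : 0 < l) (M : ℝ) :
    ∃ R N : ℝ, ∀ (z : X) (m : ℕ), busemann T x₀ l z ≤ -R → N ≤ m →
      M ≤ gromovProd z ((T ^ m) x₀) x₀ := by
  obtain ⟨C, hC⟩ := id hT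
  refine ⟨2 * (M + 3 * δ) + C + 1, (M + 3 * δ + 3 * C / 2) / l, fun z m hz hm => ?_⟩
  -- a far orbit point `Tᵐ' x₀` almost realising the `liminf` defining `busemann T x₀ l z`
  obtain ⟨m', hnear, hm'⟩ := ((hT.isBounded_range z).frequently_lt_liminf_add one_pos
    |>.and_eventually (eventually_ge_atTop m)).exists
  have hnear : dist z ((T ^ m') x₀) - m' * l < busemann T x₀ l z + 1 := hnear
  have h₁ : M + 3 * δ ≤ gromovProd z ((T ^ m') x₀) x₀ := by
    unfold gromovProd
    linarith [abs_le.1 (hC m'), dist_nonneg (x := x₀) (y := z), dist_comm ((T ^ m') x₀) x₀]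
  have h₂ : M + 3 * δ ≤ gromovProd ((T ^ m') x₀) ((T ^ m) x₀) x₀ := by
    linarith [(div_le_iff₀ hl).1 hm, mul_sub_le_gromovProd_pow hC hm']
  linarith [le_min h₁ h₂, hhyp.min_sub_le_gromovProd hgeo hδ x₀ z ((T ^ m) x₀) ((T ^ m') x₀)]

end RipsHyperbolic

theorem product_attracting_fixed_point_general
    {X : Type*} [MetricSpace X] (δ : ℝ) (hδ : 0 ≤ δ)
    (hgeo : GeodesicMetricSpace X) (hhyp : RipsHyperbolic X δ)
    (x₀ : X) (A B : X ≃ᵢ X) (lA lB : ℝ)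
    (hlA : Tendsto (fun n : ℕ => dist ((A ^ n) x₀) x₀ / n) atTop (𝓝 lA)) (hlA0 : 0 < lA)
    (hlB : Tendsto (fun n : ℕ => dist ((B ^ n) x₀) x₀ / n) atTop (𝓝 lB))
    (hshared : ∀ M : ℝ, ∃ N : ℝ, ∀ n m : ℕ, N ≤ (n : ℝ) → N ≤ (m : ℝ) →
      M ≤ gromovProd ((A ^ n) x₀) ((B⁻¹ ^ m) x₀) x₀)
    (LA LB : ℝ → X)
    (hLA : IsGeodesicFromTo A LA) (hLB : IsGeodesicFromTo B LB)
    (hbig : lA > lB + 88 * δ) :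
    ∀ M : ℝ, ∃ N : ℝ, ∀ n m : ℕ, N ≤ (n : ℝ) → N ≤ (m : ℝ) →
      M ≤ gromovProd (((A * B) ^ n) x₀) ((A ^ m) x₀) x₀ := by
  intro M
  have hA := hLA.isCoarseTranslation hhyp hgeo hδ x₀ hlA
  have hB := (hLB.isCoarseTranslation hhyp hgeo hδ x₀ hlB).inv
  have hstep : ∀ w, busemann A x₀ lA ((A * B) w) ≤ busemann A x₀ lA w - (lA - lB - 6 * δ) := by
    intro w
    have hβA := hA.busemann_apply (B w)
    have hβB := hB.busemann_apply (B w)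
    rw [IsometryEquiv.inv_apply_self] at hβB
    rw [IsometryEquiv.mul_apply, hβA]
    linarith [hhyp.busemann_sub_busemann_le hgeo hδ hA hB hshared (B w) w]
  have horbit : ∀ n : ℕ, busemann A x₀ lA (((A * B) ^ n) x₀) ≤
      busemann A x₀ lA x₀ - n * (lA - lB - 6 * δ) := by
    intro n
    induction n with
    | zero => simp
    | succ n ih =>
      rw [pow_succ', IsometryEquiv.mul_apply]
      push_cast
      linarith [hstep (((A * B) ^ n) x₀)]
  obtain ⟨R, N, hRN⟩ := hhyp.le_gromovProd_of_busemann_le hgeo hδ hA hlA0 M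
  refine ⟨max N ((busemann A x₀ lA x₀ + R) / (lA - lB - 6 * δ)), fun n m hn hm =>
    hRN _ m ?_ (le_of_max_le_left hm)⟩
  linarith [horbit n, (div_le_iff₀ (by linarith)).1 (le_of_max_le_right hn)]

/-- If `A`, `B` and `AB` are hyperbolic isometries with `A⁺ = B⁻`, geodesic
lines between the fixed points exist, and `l_S(A) > l_S(B) + 88δ`, then `(AB)⁺ = A⁺`:
the Gromov products `((AB)ⁿx₀ | Aᵐx₀)_{x₀}` tend to `+∞` as `min(n,m) → +∞`. -/
theorem product_attracting_fixed_point
    {X : Type*} [MetricSpace X] (δ : ℝ) (hδ : 0 ≤ δ)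
    (hgeo : GeodesicMetricSpace X) (hhyp : RipsHyperbolic X δ)
    (x₀ : X) (A B : X ≃ᵢ X) (lA lB lAB : ℝ)
    (hlA : Tendsto (fun n : ℕ => dist ((A ^ n) x₀) x₀ / n) atTop (𝓝 lA)) (hlA0 : 0 < lA)
    (hlB : Tendsto (fun n : ℕ => dist ((B ^ n) x₀) x₀ / n) atTop (𝓝 lB)) (hlB0 : 0 < lB)
    (hlAB : Tendsto (fun n : ℕ => dist (((A * B) ^ n) x₀) x₀ / n) atTop (𝓝 lAB))
    (hlAB0 : 0 < lAB)
    (hshared : ∀ M : ℝ, ∃ N : ℝ, ∀ n m : ℕ, N ≤ (n : ℝ) → N ≤ (m : ℝ) →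
      M ≤ gromovProd ((A ^ n) x₀) ((B⁻¹ ^ m) x₀) x₀)
    (LA LB LAB : ℝ → X)
    (hLA : IsGeodesicFromTo A LA) (hLB : IsGeodesicFromTo B LB)
    (hLAB : IsGeodesicFromTo (A * B) LAB)
    (hbig : lA > lB + 88 * δ) :
    ∀ M : ℝ, ∃ N : ℝ, ∀ n m : ℕ, N ≤ (n : ℝ) → N ≤ (m : ℝ) →
      M ≤ gromovProd (((A * B) ^ n) x₀) ((A ^ m) x₀) x₀ :=
  product_attracting_fixed_point_general δ hδ hgeo hhyp x₀ A B lA lB hlA hlA0 hlB hshared LA LB hLA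
    hLB hbig
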